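/- Let Σ be a finite simplicial complex and let L be an exhausting valid interleaved removal sequence on Σ. Then there exists an exhausting coreduction-based removal sequence on Σ (using only coreduction pairs and free simplices) that removes exactly the same set of pairs and exactly the same set of single (critical) simplices as L; in particular it produces the same Forman gradient. (Proposition 3, coreduction version.) -/

import Mathlib

open Finset

variable {α : Type*}

/-- `σ` is an immediate face of `τ`. -/
def ImmFace (σ τ : Finset α) : Prop :=
  σ ⊆ τ ∧ σ.card + 1 = τ.card

/-- A simplicial complex: a family of nonempty finsets closed under nonempty subsets. -/
def IsComplex (S : Set (Finset α)) : Prop :=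
  (∀ σ ∈ S, σ.Nonempty) ∧ ∀ τ ∈ S, ∀ σ : Finset α, σ ⊆ τ → σ.Nonempty → σ ∈ S

/-- Immediate boundary of `τ` in the family `S`. -/
def bd (S : Set (Finset α)) (τ : Finset α) : Set (Finset α) :=
  {σ ∈ S | ImmFace σ τ}

/-- Immediate coboundary of `σ` in the family `S`. -/
def cbd (S : Set (Finset α)) (σ : Finset α) : Set (Finset α) :=
  {τ ∈ S | ImmFace σ τ}

/-- `(σ, τ)` is a coreduction pair in `S`. -/
def CoredPair (S : Set (Finset α)) (σ τ : Finset α) : Prop :=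
  σ ∈ S ∧ τ ∈ S ∧ ImmFace σ τ ∧ bd S τ = {σ}

/-- `(σ, τ)` is a reduction pair in `S`. -/
def RedPair (S : Set (Finset α)) (σ τ : Finset α) : Prop :=
  σ ∈ S ∧ τ ∈ S ∧ ImmFace σ τ ∧ cbd S σ = {τ}

/-- `σ` is a free simplex in `S`. -/
def FreeSimplex (S : Set (Finset α)) (σ : Finset α) : Prop :=
  σ ∈ S ∧ bd S σ = ∅

/-- `σ` is a top simplex in `S`. -/
def TopSimplex (S : Set (Finset α)) (σ : Finset α) : Prop :=
  σ ∈ S ∧ cbd S σ = ∅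

/-- `S'` is an upward-closed subfamily of `S`. -/
def UpClosedIn (S S' : Set (Finset α)) : Prop :=
  S' ⊆ S ∧ ∀ σ ∈ S', ∀ τ ∈ S, σ ⊆ τ → τ ∈ S'

/-- An operation: removal of a pair of simplices, or of a single simplex. -/
abbrev Op (α : Type*) := (Finset α × Finset α) ⊕ Finset α

/-- Excise the simplices of an operation from a family. -/
def removeOp (S : Set (Finset α)) : Op α → Set (Finset α)
  | Sum.inl (σ, τ) => S \ {σ, τ}
  | Sum.inr σ => S \ {σ}

/-- Remaining family after performing a list of operations in order. -/
def remaining (S : Set (Finset α)) (L : List (Op α)) : Set (Finset α) :=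
  L.foldl removeOp S

/-- A coreduction-based removal sequence: every pair is a coreduction pair and
every single simplex is free, in the current remaining family. -/
def IsCoredSeq (S : Set (Finset α)) : List (Op α) → Prop
  | [] => True
  | o :: L =>
      (match o with
        | Sum.inl (σ, τ) => CoredPair S σ τ
        | Sum.inr σ => FreeSimplex S σ) ∧ IsCoredSeq (removeOp S o) L

/-- A reduction-based removal sequence: every pair is a reduction pair and
every single simplex is top, in the current remaining family. -/
def IsRedSeq (S : Set (Finset α)) : List (Op α) → Prop
  | [] => True
  | o :: L =>
      (match o with
        | Sum.inl (σ, τ) => RedPair S σ τ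
        | Sum.inr σ => TopSimplex S σ) ∧ IsRedSeq (removeOp S o) L

/-- A valid interleaved removal sequence: every pair is a coreduction or
reduction pair, and every single simplex is free or top, in the current
remaining family. -/
def IsInterSeq (S : Set (Finset α)) : List (Op α) → Prop
  | [] => True
  | o :: L =>
      (match o with
        | Sum.inl (σ, τ) => CoredPair S σ τ ∨ RedPair S σ τ
        | Sum.inr σ => FreeSimplex S σ ∨ TopSimplex S σ) ∧ IsInterSeq (removeOp S o) L

/-- A discrete vector field on `S`: pairs (face, immediate coface) of simplices of `S`,
each simplex of `S` belonging to at most one pair. -/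
def IsDVF (S : Set (Finset α)) (V : Set (Finset α × Finset α)) : Prop :=
  (∀ p ∈ V, p.1 ∈ S ∧ p.2 ∈ S ∧ ImmFace p.1 p.2) ∧
  ∀ σ ∈ S, ∀ p ∈ V, ∀ q ∈ V,
    (σ = p.1 ∨ σ = p.2) → (σ = q.1 ∨ σ = q.2) → p = q

/-- A `V`-path: a nonempty sequence of pairs of `V` such that each `σ_{i+1}` is an
immediate face of `τ_i` different from `σ_i`. -/
def IsVPath (V : Set (Finset α × Finset α)) (P : List (Finset α × Finset α)) : Prop :=
  P ≠ [] ∧ (∀ p ∈ P, p ∈ V) ∧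
  P.Chain' (fun p q => ImmFace q.1 p.2 ∧ q.1 ≠ p.1)

/-- A closed `V`-path: `σ_1` is an immediate face of `τ_r` different from `σ_r`. -/
def IsClosedVPath (V : Set (Finset α × Finset α))
    (P : List (Finset α × Finset α)) : Prop :=
  ∃ hne : P ≠ [], IsVPath V P ∧
    ImmFace (P.head hne).1 (P.getLast hne).2 ∧
    (P.head hne).1 ≠ (P.getLast hne).1

/-- The lower star of a vertex `v` with respect to a vertex function `F`. -/
def lowerStar (S : Set (Finset α)) (F : α → ℝ) (v : α) : Set (Finset α) :=
  {σ ∈ S | v ∈ σ ∧ ∀ w ∈ σ, F v ≤ F w}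


section Prop3Aux

set_option linter.unusedSectionVars false

attribute [-instance] Sum.instBEq

variable {α : Type*} [DecidableEq α]

/-- Simplices removed by an operation. -/
def opSet : Op α → Set (Finset α)
  | Sum.inl p => {p.1, p.2}
  | Sum.inr σ => {σ}

lemma removeOp_eq (S : Set (Finset α)) (o : Op α) : removeOp S o = S \ opSet o := by
  cases o with
  | inl p => obtain ⟨a, b⟩ := p; rfl
  | inr σ => rfl

lemma opSet_nonempty (o : Op α) : (opSet o).Nonempty := by
  cases o with
  | inl p => exact ⟨p.1, Set.mem_insert _ _⟩
  | inr σ => exact ⟨σ, rfl⟩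

/-- The step condition of an interleaved sequence. -/
def interStep (S : Set (Finset α)) : Op α → Prop
  | Sum.inl (σ, τ) => CoredPair S σ τ ∨ RedPair S σ τ
  | Sum.inr σ => FreeSimplex S σ ∨ TopSimplex S σ

/-- The step condition of a coreduction sequence. -/
def coredStep (S : Set (Finset α)) : Op α → Prop
  | Sum.inl (σ, τ) => CoredPair S σ τ
  | Sum.inr σ => FreeSimplex S σ

lemma isInterSeq_cons {S : Set (Finset α)} {o : Op α} {L : List (Op α)} :
    IsInterSeq S (o :: L) ↔ interStep S o ∧ IsInterSeq (removeOp S o) L := by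
  cases o with
  | inl p => obtain ⟨a, b⟩ := p; exact Iff.rfl
  | inr σ => exact Iff.rfl

lemma isCoredSeq_cons {S : Set (Finset α)} {o : Op α} {L : List (Op α)} :
    IsCoredSeq S (o :: L) ↔ coredStep S o ∧ IsCoredSeq (removeOp S o) L := by
  cases o with
  | inl p => obtain ⟨a, b⟩ := p; exact Iff.rfl
  | inr σ => exact Iff.rfl

lemma remaining_nil (S : Set (Finset α)) : remaining S [] = S := rfl

lemma remaining_cons (S : Set (Finset α)) (o : Op α) (L : List (Op α)) :
    remaining S (o :: L) = remaining (removeOp S o) L := rfl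

lemma interStep_subset {S : Set (Finset α)} {o : Op α} (h : interStep S o) :
    opSet o ⊆ S := by
  cases o with
  | inl p =>
    obtain ⟨σ, τ⟩ := p
    intro ρ hρ
    simp only [opSet, Set.mem_insert_iff, Set.mem_singleton_iff] at hρ
    rcases hρ with rfl | rfl
    · rcases h with h | h
      exacts [h.1, h.1]
    · rcases h with h | h
      exacts [h.2.1, h.2.1]
  | inr σ =>
    intro ρ hρ
    simp only [opSet, Set.mem_singleton_iff] at hρ
    subst hρ
    rcases h with h | h
    exacts [h.1, h.1]

lemma removeOp_subset (S : Set (Finset α)) (o : Op α) : removeOp S o ⊆ S := by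
  rw [removeOp_eq]; exact Set.diff_subset

lemma remaining_subset (S : Set (Finset α)) (L : List (Op α)) : remaining S L ⊆ S := by
  induction L generalizing S with
  | nil => exact subset_rfl
  | cons o L ih => exact (ih (removeOp S o)).trans (removeOp_subset S o)

lemma remaining_append (S : Set (Finset α)) (L₁ L₂ : List (Op α)) :
    remaining S (L₁ ++ L₂) = remaining (remaining S L₁) L₂ :=
  List.foldl_append

lemma remaining_take_le (S : Set (Finset α)) (L : List (Op α)) {i j : ℕ} (h : i ≤ j) :
    remaining S (L.take j) ⊆ remaining S (L.take i) := by
  conv_lhs => rw [← List.take_append_drop i (L.take j)]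
  rw [List.take_take, inf_eq_left.mpr h, remaining_append]
  exact remaining_subset _ _

lemma isInterSeq_get {S : Set (Finset α)} {L : List (Op α)} (hL : IsInterSeq S L) :
    ∀ i (hi : i < L.length), interStep (remaining S (L.take i)) (L.get ⟨i, hi⟩) := by
  induction L generalizing S with
  | nil => intro i hi; simp at hi
  | cons o L ih =>
    rw [isInterSeq_cons] at hL
    intro i hi
    match i with
    | 0 => simpa [remaining_nil] using hL.1
    | Nat.succ n =>
      have h := ih hL.2 n (by simpa using hi)
      simpa [remaining_cons] using h

lemma interSeq_ops {S : Set (Finset α)} {L : List (Op α)} (hL : IsInterSeq S L) :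
    (∀ o ∈ L, opSet o ⊆ S) ∧ L.Pairwise (fun o o' => Disjoint (opSet o) (opSet o')) := by
  induction L generalizing S with
  | nil => simp
  | cons o L ih =>
    rw [isInterSeq_cons] at hL
    obtain ⟨hsub, hpw⟩ := ih hL.2
    have h0 : opSet o ⊆ S := interStep_subset hL.1
    refine ⟨?_, ?_⟩
    · intro o' ho'
      rcases List.mem_cons.1 ho' with rfl | ho'
      · exact h0
      · exact (hsub o' ho').trans (removeOp_subset S o)
    · refine List.Pairwise.cons (fun o' ho' => ?_) hpw
      have h1 : opSet o' ⊆ S \ opSet o := by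
        rw [← removeOp_eq]; exact hsub o' ho'
      exact Set.disjoint_left.2 fun x hx hx' => (h1 hx').2 hx

lemma remaining_cover {S : Set (Finset α)} {L : List (Op α)} (hex : remaining S L = ∅) :
    ∀ σ ∈ S, ∃ o ∈ L, σ ∈ opSet o := by
  induction L generalizing S with
  | nil =>
    intro σ hσ
    rw [remaining_nil] at hex
    exact absurd (hex ▸ hσ) (Set.notMem_empty σ)
  | cons o L ih =>
    intro σ hσ
    by_cases h : σ ∈ opSet o
    · exact ⟨o, List.mem_cons_self, h⟩
    · obtain ⟨o', ho', hm⟩ := ih (S := removeOp S o) hex σ (by rw [removeOp_eq]; exact ⟨hσ, h⟩)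
      exact ⟨o', List.mem_cons_of_mem o ho', hm⟩

lemma interSeq_immFace {S : Set (Finset α)} {L : List (Op α)} (hL : IsInterSeq S L) :
    ∀ σ τ : Finset α, Sum.inl (σ, τ) ∈ L → ImmFace σ τ := by
  induction L generalizing S with
  | nil => simp
  | cons o L ih =>
    rw [isInterSeq_cons] at hL
    intro σ τ h
    rcases List.mem_cons.1 h with rfl | h
    · rcases hL.1 with h' | h'
      exacts [h'.2.2.1, h'.2.2.1]
    · exact ih hL.2 σ τ h

open Classical in
/-- Rank of a pair, used to show termination of the greedy coreduction search. -/
noncomputable def mRank (S : Set (Finset α)) (L : List (Op α)) (p : Finset α × Finset α) : ℕ :=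
  if CoredPair (remaining S (L.take (L.idxOf (Sum.inl p)))) p.1 p.2
  then L.idxOf (Sum.inl p)
  else 2 * L.length + (L.length - L.idxOf (Sum.inl p))

lemma mRank_lt {S : Set (Finset α)} {L : List (Op α)} (hL : IsInterSeq S L)
    {p q : Finset α × Finset α} (hp : Sum.inl p ∈ L) (hq : Sum.inl q ∈ L)
    (himm : ImmFace q.1 p.2) (hne : q.1 ≠ p.1) : mRank S L q < mRank S L p := by
  classical
  obtain ⟨σp, τp⟩ := p
  obtain ⟨σq, τq⟩ := q
  simp only at himm hne
  have hpq : (Sum.inl (σp, τp) : Op α) ≠ Sum.inl (σq, τq) := by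
    intro h
    apply hne
    simp only [Sum.inl.injEq, Prod.mk.injEq] at h
    rw [h.1]
  have hilen : L.idxOf (Sum.inl (σp, τp)) < L.length := List.idxOf_lt_length_iff.2 hp
  have hjlen : L.idxOf (Sum.inl (σq, τq)) < L.length := List.idxOf_lt_length_iff.2 hq
  have hgeti : L.get ⟨L.idxOf (Sum.inl (σp, τp)), hilen⟩ = Sum.inl (σp, τp) :=
    List.idxOf_get hilen
  have hgetj : L.get ⟨L.idxOf (Sum.inl (σq, τq)), hjlen⟩ = Sum.inl (σq, τq) :=
    List.idxOf_get hjlen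
  set i := L.idxOf (Sum.inl (σp, τp) : Op α) with hidef
  set j := L.idxOf (Sum.inl (σq, τq) : Op α) with hjdef
  have hij : i ≠ j := by
    intro h
    apply hpq
    rw [← hgeti, ← hgetj]
    exact congrArg L.get (Fin.ext h)
  have hstepi := isInterSeq_get hL i hilen
  rw [hgeti] at hstepi
  have hstepj := isInterSeq_get hL j hjlen
  rw [hgetj] at hstepj
  have hdisj : Disjoint (opSet (Sum.inl (σp, τp) : Op α)) (opSet (Sum.inl (σq, τq) : Op α)) :=
    (haveI : Std.Symm (fun o o' : Op α => Disjoint (opSet o) (opSet o')) := ⟨fun a b h => h.symm⟩; (interSeq_ops hL).2.forall hp hq hpq)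
  have F1 : CoredPair (remaining S (L.take i)) σp τp → i < j → False := by
    intro hc hlt
    have hq1 : σq ∈ remaining S (L.take j) :=
      interStep_subset hstepj (Set.mem_insert _ _)
    have hq1' : σq ∈ remaining S (L.take i) := remaining_take_le S L hlt.le hq1
    have hmem : σq ∈ bd (remaining S (L.take i)) τp := ⟨hq1', himm⟩
    rw [hc.2.2.2] at hmem
    exact hne hmem
  have F2 : RedPair (remaining S (L.take j)) σq τq → j < i → False := by
    intro hr hlt
    have hp2 : τp ∈ remaining S (L.take i) :=
      interStep_subset hstepi (Set.mem_insert_iff.2 (Or.inr rfl))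
    have hp2' : τp ∈ remaining S (L.take j) := remaining_take_le S L hlt.le hp2
    have hmem : τp ∈ cbd (remaining S (L.take j)) σq := ⟨hp2', himm⟩
    rw [hr.2.2.2] at hmem
    exact Set.disjoint_left.1 hdisj (Set.mem_insert_iff.2 (Or.inr rfl))
      (Set.mem_insert_iff.2 (Or.inr hmem))
  simp only [mRank, ← hidef, ← hjdef]
  split_ifs with h2 h1 h1
  · -- both coreductions : j < i
    have h3 : ¬ i < j := fun hlt => F1 h1 hlt
    omega
  · -- q coreduction, p reduction
    omega
  · -- q reduction, p coreduction : impossible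
    have hred : RedPair (remaining S (L.take j)) σq τq := hstepj.resolve_left h2
    have h3 : ¬ i < j := fun hlt => F1 h1 hlt
    have h4 : ¬ j < i := fun hlt => F2 hred hlt
    omega
  · -- both reductions : i < j
    have hred : RedPair (remaining S (L.take j)) σq τq := hstepj.resolve_left h2
    have h4 : ¬ j < i := fun hlt => F2 hred hlt
    omega

lemma find_step {S : Set (Finset α)} {L : List (Op α)} (hL : IsInterSeq S L)
    {S' : Set (Finset α)} {M : List (Op α)}
    (hML : ∀ p : Finset α × Finset α, Sum.inl p ∈ M → Sum.inl p ∈ L)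
    (hsub : ∀ o ∈ M, opSet o ⊆ S')
    (hcov : ∀ σ ∈ S', ∃ o ∈ M, σ ∈ opSet o)
    (himmM : ∀ σ τ : Finset α, Sum.inl (σ, τ) ∈ M → ImmFace σ τ)
    {n : ℕ} (hmin : ∀ ρ ∈ S', n ≤ ρ.card) :
    ∀ (k : ℕ) (p : Finset α × Finset α), Sum.inl p ∈ M → mRank S L p ≤ k →
      p.1.card = n → ∃ o ∈ M, coredStep S' o := by
  intro k
  induction k using Nat.strong_induction_on with
  | _ k ih =>
    intro p hpM hpk hcard
    obtain ⟨σp, τp⟩ := p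
    simp only at hcard
    have himmp : ImmFace σp τp := himmM _ _ hpM
    by_cases hbd : ∃ δ, δ ∈ bd S' τp ∧ δ ≠ σp
    · obtain ⟨δ, ⟨hδS', hδimm⟩, hδne⟩ := hbd
      obtain ⟨o', ho', hδo'⟩ := hcov δ hδS'
      have hδcard : δ.card = n := by
        have h1 := hδimm.2
        have h2 := himmp.2
        omega
      cases o' with
      | inr ρ =>
        simp only [opSet, Set.mem_singleton_iff] at hδo'
        subst hδo'
        refine ⟨Sum.inr δ, ho', hδS', ?_⟩
        ext ρ'
        simp only [bd, Set.mem_setOf_eq, Set.mem_empty_iff_false, iff_false, not_and]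
        intro hρ'S himm'
        have h1 := hmin ρ' hρ'S
        have h2 := himm'.2
        omega
      | inl q =>
        obtain ⟨σq, τq⟩ := q
        simp only [opSet, Set.mem_insert_iff, Set.mem_singleton_iff] at hδo'
        rcases hδo' with rfl | rfl
        · -- δ = σq : recurse
          have hqlt : mRank S L (δ, τq) < mRank S L (σp, τp) :=
            mRank_lt hL (hML _ hpM) (hML _ ho') hδimm hδne
          exact ih (mRank S L (δ, τq)) (lt_of_lt_of_le hqlt hpk) (δ, τq) ho' le_rfl hδcard
        · -- δ = τq : contradiction on cards
          exfalso
          have hσq : σq ∈ S' := hsub _ ho' (Set.mem_insert _ _)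
          have himmq := himmM _ _ ho'
          have h1 := hmin σq hσq
          have h2 := himmq.2
          omega
    · push_neg at hbd
      refine ⟨Sum.inl (σp, τp), hpM, ?_⟩
      have hσ : σp ∈ S' := hsub _ hpM (Set.mem_insert _ _)
      have hτ : τp ∈ S' := hsub _ hpM (Set.mem_insert_iff.2 (Or.inr rfl))
      refine ⟨hσ, hτ, himmp, ?_⟩
      ext δ
      simp only [bd, Set.mem_setOf_eq, Set.mem_singleton_iff]
      constructor
      · rintro ⟨h1, h2⟩
        exact hbd δ ⟨h1, h2⟩
      · rintro rfl
        exact ⟨hσ, himmp⟩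

lemma build {S : Set (Finset α)} {L : List (Op α)} (hL : IsInterSeq S L) :
    ∀ (k : ℕ) (M : List (Op α)) (S' : Set (Finset α)), M.length ≤ k → S'.Finite →
      (∀ p : Finset α × Finset α, Sum.inl p ∈ M → Sum.inl p ∈ L) →
      M.Pairwise (fun o o' => Disjoint (opSet o) (opSet o')) →
      (∀ o ∈ M, opSet o ⊆ S') →
      (∀ σ ∈ S', ∃ o ∈ M, σ ∈ opSet o) →
      (∀ σ τ : Finset α, Sum.inl (σ, τ) ∈ M → ImmFace σ τ) →
      ∃ L' : List (Op α), IsCoredSeq S' L' ∧ remaining S' L' = ∅ ∧ ∀ o, (o ∈ L' ↔ o ∈ M) := by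
  intro k
  induction k with
  | zero =>
    intro M S' hlen hfin hML hpw hsub hcov himmM
    have hM : M = [] := List.length_eq_zero_iff.1 (Nat.le_zero.1 hlen)
    subst hM
    have hS' : S' = ∅ := by
      ext σ
      simp only [Set.mem_empty_iff_false, iff_false]
      intro hσ
      obtain ⟨o, ho, _⟩ := hcov σ hσ
      simp at ho
    exact ⟨[], trivial, by rw [remaining_nil, hS'], by simp⟩
  | succ k ih =>
    intro M S' hlen hfin hML hpw hsub hcov himmM
    rcases Set.eq_empty_or_nonempty S' with hS' | hS'
    · have hM : M = [] := by
        cases M with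
        | nil => rfl
        | cons o M' =>
          obtain ⟨σ, hσ⟩ := opSet_nonempty o
          have := hsub o (List.mem_cons_self) hσ
          rw [hS'] at this
          exact absurd this (Set.notMem_empty σ)
      subst hM
      exact ⟨[], trivial, by rw [remaining_nil, hS'], by simp⟩
    · obtain ⟨σ₀, hσ₀f, hminf⟩ := hfin.toFinset.exists_min_image Finset.card
        (by rwa [Set.Finite.toFinset_nonempty])
      rw [Set.Finite.mem_toFinset] at hσ₀f
      have hmin : ∀ ρ ∈ S', σ₀.card ≤ ρ.card := fun ρ hρ =>
        hminf ρ (hfin.mem_toFinset.2 hρ)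
      obtain ⟨o, hoM, hstep⟩ : ∃ o ∈ M, coredStep S' o := by
        obtain ⟨o, hoM, hmem⟩ := hcov σ₀ hσ₀f
        cases o with
        | inr ρ =>
          simp only [opSet, Set.mem_singleton_iff] at hmem
          subst hmem
          refine ⟨Sum.inr σ₀, hoM, hσ₀f, ?_⟩
          ext ρ'
          simp only [bd, Set.mem_setOf_eq, Set.mem_empty_iff_false, iff_false, not_and]
          intro hρ'S himm'
          have h1 := hmin ρ' hρ'S
          have h2 := himm'.2
          omega
        | inl q =>
          obtain ⟨σq, τq⟩ := q
          simp only [opSet, Set.mem_insert_iff, Set.mem_singleton_iff] at hmem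
          rcases hmem with rfl | rfl
          · exact find_step hL hML hsub hcov himmM hmin (mRank S L (σ₀, τq)) (σ₀, τq)
              hoM le_rfl rfl
          · exfalso
            have hσq : σq ∈ S' := hsub _ hoM (Set.mem_insert _ _)
            have himmq := himmM _ _ hoM
            have h1 := hmin σq hσq
            have h2 := himmq.2
            omega
      have hNodup : M.Nodup := hpw.imp (fun {a b} hab => by
        rintro rfl
        obtain ⟨σ, hσ⟩ := opSet_nonempty a
        exact Set.disjoint_left.1 hab hσ hσ)
      have hlen' : (M.erase o).length ≤ k := by
        have h1 := List.length_erase_of_mem hoM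
        have h2 : 0 < M.length := List.length_pos_of_mem hoM
        omega
      have herased : ∀ o' ∈ M.erase o, o' ≠ o ∧ o' ∈ M := by
        intro o' h
        exact (List.Nodup.mem_erase_iff hNodup).1 h
      have hdisj : ∀ o' ∈ M.erase o, Disjoint (opSet o) (opSet o') := fun o' h =>
        (haveI : Std.Symm (fun o o' : Op α => Disjoint (opSet o) (opSet o')) := ⟨fun a b h => h.symm⟩; hpw.forall hoM (herased o' h).2 (Ne.symm (herased o' h).1))
      obtain ⟨L'', h1, h2, h3⟩ := ih (M.erase o) (removeOp S' o) hlen'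
        (by rw [removeOp_eq]; exact hfin.diff)
        (fun p hp => hML p (List.mem_of_mem_erase hp))
        (hpw.sublist (List.erase_sublist (a := o) (l := M)))
        (fun o' h => by
          rw [removeOp_eq]
          intro x hx
          exact ⟨hsub o' (herased o' h).2 hx, Set.disjoint_right.1 (hdisj o' h) hx⟩)
        (fun σ hσ => by
          rw [removeOp_eq] at hσ
          obtain ⟨o'', ho'', hm⟩ := hcov σ hσ.1
          have hne : o'' ≠ o := fun h => hσ.2 (h ▸ hm)
          exact ⟨o'', hNodup.mem_erase_iff.2 ⟨hne, ho''⟩, hm⟩)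
        (fun σ τ h => himmM σ τ (List.mem_of_mem_erase h))
      refine ⟨o :: L'', isCoredSeq_cons.2 ⟨hstep, h1⟩, ?_, ?_⟩
      · rw [remaining_cons]; exact h2
      · intro o'
        have hperm := List.perm_cons_erase hoM
        rw [hperm.mem_iff]
        simp only [List.mem_cons, h3]

end Prop3Aux

/-- Proposition 3, coreduction version: any exhausting valid interleaved removal
sequence can be replaced by an exhausting coreduction-based removal sequence that
removes exactly the same pairs and the same single (critical) simplices. -/
theorem interleaved_to_coreduction_seq {α : Type*} [DecidableEq α]
    (S : Set (Finset α)) (hS : IsComplex S) (hfin : S.Finite)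
    (L : List (Op α)) (hL : IsInterSeq S L) (hex : remaining S L = ∅) :
    ∃ L' : List (Op α), IsCoredSeq S L' ∧ remaining S L' = ∅ ∧
      (∀ p : Finset α × Finset α, Sum.inl p ∈ L' ↔ Sum.inl p ∈ L) ∧
      (∀ σ : Finset α, Sum.inr σ ∈ L' ↔ Sum.inr σ ∈ L) := by
  obtain ⟨hsub, hpw⟩ := interSeq_ops hL
  obtain ⟨L', h1, h2, h3⟩ := build hL L.length L S le_rfl hfin (fun _ h => h) hpw hsub
    (remaining_cover hex) (interSeq_immFace hL)
  exact ⟨L', h1, h2, fun p => h3 _, fun σ => h3 _⟩
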